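/- arXiv:1501.00216 — 2 statements merged into one kernel-verified Lean document; each statement's English description precedes it below -/
import Mathlib

section
/- Let a : Fin n → ℝ be nonnegative with S = Σ a i > 0, and let x : Fin n → {0,1} satisfy Σ x i ≤ n/2 and Σ a i · x i > 0. Then (4/S)·(Σ a i · x i) + 4·(Σ (1 − x i)) + S/(Σ a i · x i) − 1 ≥ 2n + 3, with equality if and only if Σ x i = n/2 and Σ a i · x i = S/2. -/
/-! The objective splits as `(4 T / S + S / T - 4) + 4 (n - Σ x) + 3` with `T = Σ a x`. The first
term is `(2T - S)² / (S T) ≥ 0` (AM-GM), the second is at least `2n` by the cardinality bound, and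
the bound `2n + 3` is attained exactly when both are tight. -/

lemma four_div_mul_add_div_sub_four {s t : ℝ} (hs : 0 < s) (ht : 0 < t) :
    4 / s * t + s / t - 4 = (2 * t - s) ^ 2 / (s * t) := by
  field_simp
  ring

lemma four_le_four_div_mul_add_div {s t : ℝ} (hs : 0 < s) (ht : 0 < t) :
    4 ≤ 4 / s * t + s / t := by
  have hid := four_div_mul_add_div_sub_four hs ht
  have hsq : 0 ≤ (2 * t - s) ^ 2 / (s * t) := by positivity
  linarith

lemma four_div_mul_add_div_eq_four_iff {s t : ℝ} (hs : 0 < s) (ht : 0 < t) :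
    4 / s * t + s / t = 4 ↔ t = s / 2 := by
  rw [← sub_eq_zero, four_div_mul_add_div_sub_four hs ht,
    div_eq_zero_iff, or_iff_left (mul_pos hs ht).ne', sq_eq_zero_iff]
  constructor <;> intro h <;> linarith

open Finset in
theorem stmt_1_general (n : ℕ) (a x : Fin n → ℝ)
    (hS : 0 < ∑ i, a i)
    (hcap : ∑ i, x i ≤ (n : ℝ) / 2)
    (hpos : 0 < ∑ i, a i * x i) :
    (2 * (n : ℝ) + 3 ≤
      (4 / ∑ i, a i) * (∑ i, a i * x i) + 4 * (∑ i, (1 - x i))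
        + (∑ i, a i) / (∑ i, a i * x i) - 1) ∧
    ((4 / ∑ i, a i) * (∑ i, a i * x i) + 4 * (∑ i, (1 - x i))
        + (∑ i, a i) / (∑ i, a i * x i) - 1 = 2 * (n : ℝ) + 3 ↔
      (∑ i, x i = (n : ℝ) / 2 ∧ ∑ i, a i * x i = (∑ i, a i) / 2)) := by
  have hmisses : ∑ i, (1 - x i) = n - ∑ i, x i := by simp [sum_sub_distrib]
  rw [hmisses]
  have hamgm := four_le_four_div_mul_add_div hS hpos
  refine ⟨by linarith, fun h => ?_, fun ⟨hcard, hhalf⟩ => ?_⟩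
  · have htight : 4 / (∑ i, a i) * (∑ i, a i * x i) + (∑ i, a i) / (∑ i, a i * x i) = 4 := by
      linarith
    exact ⟨by linarith, (four_div_mul_add_div_eq_four_iff hS hpos).1 htight⟩
  · have htight := (four_div_mul_add_div_eq_four_iff hS hpos).2 hhalf
    rw [hcard]
    linarith

open Finset in
theorem stmt_1 (n : ℕ) (a x : Fin n → ℝ)
    (ha : ∀ i, 0 ≤ a i)
    (hx01 : ∀ i, x i = 0 ∨ x i = 1)
    (hS : 0 < ∑ i, a i)
    (hcap : ∑ i, x i ≤ (n : ℝ) / 2)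
    (hpos : 0 < ∑ i, a i * x i) :
    (2 * (n : ℝ) + 3 ≤
      (4 / ∑ i, a i) * (∑ i, a i * x i) + 4 * (∑ i, (1 - x i))
        + (∑ i, a i) / (∑ i, a i * x i) - 1) ∧
    ((4 / ∑ i, a i) * (∑ i, a i * x i) + 4 * (∑ i, (1 - x i))
        + (∑ i, a i) / (∑ i, a i * x i) - 1 = 2 * (n : ℝ) + 3 ↔
      (∑ i, x i = (n : ℝ) / 2 ∧ ∑ i, a i * x i = (∑ i, a i) / 2)) :=
  stmt_1_general n a x hS hcap hpos
end

section
/- A multiset A of positive integers admits a partition into two parts of equal sum if and only if the multiset A' obtained by adding |A| zeros to A admits a partition into two parts of equal sum and equal cardinality. -/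
/-!
Zeros do not change sums. A part `B ≤ A` of half the sum becomes a part of the padded multiset
of half the sum and half the cardinality once `card A - card B` of the added zeros are put into
it; conversely, discarding the zeros of such a part leaves a part of `A` of half the sum.
-/

namespace Multiset

variable {M : Type*} [AddCommMonoid M]

theorem sum_filter_ne_zero [DecidableEq M] (s : Multiset M) : (s.filter (· ≠ 0)).sum = s.sum := by
  have hzero : (s.filter fun x => ¬x ≠ 0).sum = 0 :=
    sum_eq_zero fun x hx => by simpa using of_mem_filter hx
  simpa only [hzero, add_zero] using sum_filter_add_sum_filter_not (s := s) (· ≠ 0)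

theorem filter_ne_zero_le_of_le_add_replicate_zero [DecidableEq M] {s t : Multiset M} {n : ℕ}
    (h : s ≤ t + replicate n 0) : s.filter (· ≠ 0) ≤ t := by
  have hzeros : (replicate n (0 : M)).filter (· ≠ 0) = 0 :=
    filter_eq_nil.mpr fun x hx => not_not.mpr (eq_of_mem_replicate hx)
  calc s.filter (· ≠ 0) ≤ (t + replicate n 0).filter (· ≠ 0) := filter_le_filter _ h
    _ = t.filter (· ≠ 0) := by rw [filter_add, hzeros, add_zero]
    _ ≤ t := filter_le _ _

theorem exists_le_add_replicate_zero_card_eq {s t : Multiset M} (h : s ≤ t) :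
    ∃ u ≤ t + replicate (card t) 0, u.sum = s.sum ∧ card u = card t := by
  refine ⟨s + replicate (card t - card s) 0, ?_, by simp, ?_⟩
  · exact add_le_add h ((replicate_le_replicate 0).mpr (Nat.sub_le _ _))
  · rw [card_add, card_replicate, Nat.add_sub_cancel' (card_le_card h)]

end Multiset

theorem stmt_2_general (A : Multiset ℕ) :
    (∃ B ≤ A, B.sum + B.sum = A.sum) ↔
      (∃ B ≤ A + Multiset.replicate (Multiset.card A) 0,
        B.sum + B.sum = (A + Multiset.replicate (Multiset.card A) 0).sum ∧
        Multiset.card B + Multiset.card B =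
          Multiset.card (A + Multiset.replicate (Multiset.card A) 0)) := by
  constructor
  · rintro ⟨B, hB, hsum⟩
    obtain ⟨B', hB', hsum', hcard'⟩ := Multiset.exists_le_add_replicate_zero_card_eq hB
    exact ⟨B', hB', by simp [hsum', hsum], by simp [hcard']⟩
  · rintro ⟨B, hB, hsum, -⟩
    refine ⟨B.filter (· ≠ 0), Multiset.filter_ne_zero_le_of_le_add_replicate_zero hB, ?_⟩
    simpa [Multiset.sum_filter_ne_zero] using hsum

theorem stmt_2 (A : Multiset ℕ) (hA : ∀ a ∈ A, 0 < a) :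
    (∃ B ≤ A, B.sum + B.sum = A.sum) ↔
      (∃ B ≤ A + Multiset.replicate (Multiset.card A) 0,
        B.sum + B.sum = (A + Multiset.replicate (Multiset.card A) 0).sum ∧
        Multiset.card B + Multiset.card B =
          Multiset.card (A + Multiset.replicate (Multiset.card A) 0)) :=
  stmt_2_general A
end
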